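/- Let A be a commutative unital C*-algebra and let M be a full Hilbert A-module. Denote by Γ*(M) the linear span of {θ_{x,ŷ} : x, y ∈ M}. The map φ : Γ*(M) → A given by φ(Σ_{i=1}^n θ_{x_i, ŷ_i}) = Σ_{i=1}^n ⟨x_i, y_i⟩ is well defined, and satisfies φ(SA) = φ(AS) for every S ∈ Γ*(M) and every A ∈ End*_A(M). -/

import Mathlib

/-!
Evaluating at a character `χ` of the commutative C*-algebra `A` turns `⟨·,·⟩` into a positive
semidefinite Hermitian form on `M`. If `∑ θ_{xᵢ,ŷᵢ} = 0`, then `∑ χ⟨z,yᵢ⟩ χ⟨xᵢ,w⟩ = 0` for all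
`z, w`. Factoring the Gram matrix of the `xᵢ, yᵢ` through a finite-dimensional Hilbert space, with
`xᵢ ↦ pᵢ`, `yᵢ ↦ qᵢ`, this says that the operator `u ↦ ∑ ⟪qᵢ,u⟫ pᵢ` vanishes on the span of the
`pᵢ, qᵢ`, so its trace `∑ χ⟨xᵢ,yᵢ⟩` vanishes; by Gelfand duality `∑ ⟨xᵢ,yᵢ⟩ = 0`. Hence the span
of the pairs `(θ_{x,ŷ}, ⟨x,y⟩)` is the graph of a linear map `φ` on `Γ*(M)`.
An adjointable `T` is `A`-linear, so `θ_{x,ŷ} T = θ_{x,(T*y)^}` and `T θ_{x,ŷ} = θ_{Tx,ŷ}`, and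
both have trace `⟨Tx,y⟩ = ⟨x,T*y⟩`.
-/

set_option synthInstance.maxHeartbeats 1000000
set_option maxHeartbeats 1000000

/-- `Γ*(M)`: the linear span of the operators `θ_{x,ŷ} : z ↦ ⟨z,y⟩ • x` for `x, y ∈ M`. -/
noncomputable def GammaStar (A : Type*) (M : Type*) [CStarAlgebra A] [NormedAddCommGroup M]
    [NormedSpace ℂ M] [Module A M] [IsScalarTower ℂ A M] (inn : M → M → A) :
    Submodule ℂ (M →L[ℂ] M) :=
  Submodule.span ℂ {T | ∃ x y : M, ∀ z : M, T z = inn z y • x}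

variable {A : Type*} [CommCStarAlgebra A] [PartialOrder A] [StarOrderedRing A]
variable {M : Type*} [NormedAddCommGroup M] [CompleteSpace M] [NormedSpace ℂ M]
  [Module A M] [IsScalarTower ℂ A M] [IsBoundedSMul A M]

open scoped InnerProductSpace ComplexOrder
open Finset Submodule

section TraceArgument

variable {𝕜 E ι : Type*} [RCLike 𝕜] [NormedAddCommGroup E] [InnerProductSpace 𝕜 E] [Fintype ι]

theorem sum_inner_mul_inner_eq_zero_of_mem_span {p q : ι → E} {s : Set E}
    (h : ∀ z ∈ s, ∀ w ∈ s, ∑ i, ⟪w, p i⟫_𝕜 * ⟪q i, z⟫_𝕜 = 0) {z w : E}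
    (hz : z ∈ span 𝕜 s) (hw : w ∈ span 𝕜 s) :
    ∑ i, ⟪w, p i⟫_𝕜 * ⟪q i, z⟫_𝕜 = 0 := by
  induction hz, hw using Submodule.span_induction₂ with
  | mem_mem z w hz hw => exact h z hz w hw
  | zero_left w hw => simp
  | zero_right z hz => simp
  | add_left z₁ z₂ w _ _ _ ih₁ ih₂ =>
    simp only [inner_add_right, mul_add, sum_add_distrib, ih₁, ih₂, add_zero]
  | add_right z w₁ w₂ _ _ _ ih₁ ih₂ =>
    simp only [inner_add_left, add_mul, sum_add_distrib, ih₁, ih₂, add_zero]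
  | smul_left r z w _ _ ih =>
    simp only [inner_smul_right, mul_left_comm, ← mul_sum, ih, mul_zero]
  | smul_right r z w _ _ ih =>
    simp only [inner_smul_left, mul_assoc, ← mul_sum, ih, mul_zero]

theorem sum_inner_eq_zero_of_sum_inner_mul_inner_eq_zero {p q : ι → E} (V : Submodule 𝕜 E)
    [FiniteDimensional 𝕜 V] (hp : ∀ i, p i ∈ V) (hq : ∀ i, q i ∈ V)
    (h : ∀ z ∈ V, ∀ w ∈ V, ∑ i, ⟪w, p i⟫_𝕜 * ⟪q i, z⟫_𝕜 = 0) :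
    ∑ i, ⟪q i, p i⟫_𝕜 = 0 := by
  set b := stdOrthonormalBasis 𝕜 V
  have expand (x y : V) : ⟪(x : E), y⟫_𝕜 = ∑ r, ⟪(x : E), b r⟫_𝕜 * ⟪(b r : E), y⟫_𝕜 := by
    simp only [← Submodule.coe_inner, b.sum_inner_mul_inner]
  calc ∑ i, ⟪q i, p i⟫_𝕜
      = ∑ i, ∑ r, ⟪q i, (b r : E)⟫_𝕜 * ⟪(b r : E), p i⟫_𝕜 :=
        sum_congr rfl fun i _ => expand ⟨q i, hq i⟩ ⟨p i, hp i⟩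
    _ = ∑ r, ∑ i, ⟪(b r : E), p i⟫_𝕜 * ⟪q i, (b r : E)⟫_𝕜 := by
        rw [sum_comm]
        simp only [mul_comm]
    _ = 0 := sum_eq_zero fun r _ => h _ (b r).2 _ (b r).2

theorem Matrix.PosSemidef.exists_eq_gram {n : Type*} [Fintype n] {G : Matrix n n 𝕜}
    (hG : G.PosSemidef) : ∃ c : n → EuclideanSpace 𝕜 n, G = Matrix.gram 𝕜 c := by
  classical
  open scoped MatrixOrder in
  obtain ⟨C, rfl⟩ := CStarAlgebra.nonneg_iff_eq_star_mul_self.mp hG.nonneg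
  refine ⟨fun j => WithLp.toLp 2 fun r => C r j, ?_⟩
  ext j k
  simp [Matrix.gram_apply, Matrix.mul_apply, PiLp.inner_apply, mul_comm]

end TraceArgument

/-- Linear in the first variable, as for left Hilbert modules (Mathlib's `inner` is linear in the
second). -/
structure IsSemiInnerProduct {R N : Type*} [Semiring R] [StarRing R] [PartialOrder R]
    [AddCommMonoid N] [Module R N] (inn : N → N → R) : Prop where
  add_left (x y z : N) : inn (x + y) z = inn x z + inn y z
  smul_left (a : R) (x y : N) : inn (a • x) y = a * inn x y
  eq_star (x y : N) : inn x y = star (inn y x)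
  nonneg (x : N) : 0 ≤ inn x x

namespace IsSemiInnerProduct

section Semiring

variable {R N : Type*} [Semiring R] [StarRing R] [PartialOrder R] [AddCommMonoid N] [Module R N]
  {inn : N → N → R} (h : IsSemiInnerProduct inn)
include h

def leftLinearMap (y : N) : N →ₗ[R] R where
  toFun x := inn x y
  map_add' x z := h.add_left x z y
  map_smul' a x := h.smul_left a x y

theorem sum_left {ι : Type*} (s : Finset ι) (x : ι → N) (y : N) :
    inn (∑ i ∈ s, x i) y = ∑ i ∈ s, inn (x i) y :=
  map_sum (h.leftLinearMap y) x s

theorem zero_left (y : N) : inn 0 y = 0 :=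
  map_zero (h.leftLinearMap y)

theorem smul_left_of_tower {S : Type*} [SMul S R] [SMul S N] [IsScalarTower S R N]
    [IsScalarTower S R R] (c : S) (x y : N) : inn (c • x) y = c • inn x y :=
  (h.leftLinearMap y).map_smul_of_tower c x

theorem sum_right {ι : Type*} (s : Finset ι) (x : N) (y : ι → N) :
    inn x (∑ i ∈ s, y i) = ∑ i ∈ s, inn x (y i) := by
  rw [h.eq_star, h.sum_left, star_sum]
  exact sum_congr rfl fun i _ => (h.eq_star x (y i)).symm

theorem smul_right (a : R) (x y : N) : inn x (a • y) = inn x y * star a := by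
  rw [h.eq_star, h.smul_left, star_mul, ← h.eq_star]

end Semiring

section Ring

variable {R N : Type*} [Ring R] [StarRing R] [PartialOrder R] [AddCommGroup N] [Module R N]
  {inn : N → N → R} (h : IsSemiInnerProduct inn)
include h

theorem sub_left (x y z : N) : inn (x - y) z = inn x z - inn y z :=
  map_sub (h.leftLinearMap z) x y

theorem map_smul_of_adjoint (h_definite : ∀ x, inn x x = 0 → x = 0) {T T' : N → N}
    (hT : ∀ u v, inn (T u) v = inn u (T' v)) (a : R) (u : N) : T (a • u) = a • T u := by
  refine sub_eq_zero.mp (h_definite _ ?_)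
  have hperp (v : N) : inn (T (a • u) - a • T u) v = 0 := by
    rw [h.sub_left, hT, h.smul_left, h.smul_left, hT, sub_self]
  exact hperp _

end Ring

theorem comp {S R N F : Type*} [CommSemiring S] [StarRing S] [PartialOrder S] [StarOrderedRing S]
    [Semiring R] [StarRing R] [PartialOrder R] [StarOrderedRing R] [Algebra S R]
    [AddCommMonoid N] [Module S N] [Module R N] [IsScalarTower S R N]
    [FunLike F R S] [AlgHomClass F S R S] [StarHomClass F R S]
    {inn : N → N → R} (h : IsSemiInnerProduct inn) (f : F) :
    IsSemiInnerProduct fun x y => f (inn x y) where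
  add_left x y z := by rw [h.add_left, map_add]
  smul_left c x y := by rw [h.smul_left_of_tower, map_smul, smul_eq_mul]
  eq_star x y := by rw [h.eq_star, map_star]
  nonneg x := map_nonneg f (h.nonneg x)

/-- The indices are transposed to match `Matrix.gram`, whose entries are conjugate-linear in the
row vector. -/
theorem posSemidef_gram {R N κ : Type*} [CommRing R] [StarRing R] [PartialOrder R]
    [AddCommMonoid N] [Module R N] [Fintype κ] {inn : N → N → R} (h : IsSemiInnerProduct inn)
    (v : κ → N) : (Matrix.of fun j k => inn (v k) (v j)).PosSemidef := by
  refine .of_dotProduct_mulVec_nonneg ?_ fun a => ?_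
  · ext j k
    simp only [Matrix.conjTranspose_apply, Matrix.of_apply]
    exact (h.eq_star _ _).symm
  · convert h.nonneg (∑ k, a k • v k) using 1
    simp only [dotProduct, Matrix.mulVec, Matrix.of_apply, h.sum_left, h.sum_right,
      h.smul_left, h.smul_right, mul_sum, Pi.star_apply]
    rw [sum_comm]
    refine sum_congr rfl fun j _ => sum_congr rfl fun k _ => ?_
    ring

theorem sum_eq_zero_of_sum_mul_eq_zero {𝕜 N ι : Type*} [RCLike 𝕜] [AddCommMonoid N]
    [Module 𝕜 N] [Fintype ι] {inn : N → N → 𝕜} (h : IsSemiInnerProduct inn) {x y : ι → N}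
    (hxy : ∀ z w, ∑ i, inn z (y i) * inn (x i) w = 0) :
    ∑ i, inn (x i) (y i) = 0 := by
  obtain ⟨c, hc⟩ := (h.posSemidef_gram (Sum.elim x y)).exists_eq_gram
  have inner_c (j k) : ⟪c j, c k⟫_𝕜 = inn (Sum.elim x y k) (Sum.elim x y j) := by
    rw [← Matrix.gram_apply, ← hc, Matrix.of_apply]
  have hmem (j) : c j ∈ span 𝕜 (Set.range c) := subset_span ⟨j, rfl⟩
  have hrange : ∀ z ∈ Set.range c, ∀ w ∈ Set.range c,
      ∑ i, ⟪w, c (.inl i)⟫_𝕜 * ⟪c (.inr i), z⟫_𝕜 = 0 := by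
    rintro _ ⟨j, rfl⟩ _ ⟨k, rfl⟩
    simpa only [inner_c, Sum.elim_inl, Sum.elim_inr, mul_comm] using
      hxy (Sum.elim x y j) (Sum.elim x y k)
  have htrace := sum_inner_eq_zero_of_sum_inner_mul_inner_eq_zero (span 𝕜 (Set.range c))
    (fun i => hmem (.inl i)) (fun i => hmem (.inr i))
    fun z hz w hw => sum_inner_mul_inner_eq_zero_of_mem_span hrange hz hw
  simpa only [inner_c, Sum.elim_inl, Sum.elim_inr] using htrace

theorem sum_eq_zero_of_sum_smul_eq_zero {A M ι : Type*} [CommCStarAlgebra A] [PartialOrder A]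
    [StarOrderedRing A] [AddCommGroup M] [Module ℂ M] [Module A M] [IsScalarTower ℂ A M]
    [Fintype ι] {inn : M → M → A} (h : IsSemiInnerProduct inn) {x y : ι → M}
    (hxy : ∀ z, ∑ i, inn z (y i) • x i = 0) : ∑ i, inn (x i) (y i) = 0 := by
  refine (gelfandTransform_bijective A).injective ?_
  ext χ
  simp only [map_sum, map_zero, ContinuousMap.zero_apply, ContinuousMap.coe_sum, Finset.sum_apply,
    WeakDual.gelfandTransform_apply_apply]
  refine (h.comp χ).sum_eq_zero_of_sum_mul_eq_zero fun z w => ?_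
  simp only [← map_mul, ← map_sum, ← h.smul_left, ← h.sum_left, hxy, h.zero_left, map_zero]

end IsSemiInnerProduct

section Operators

variable {A M : Type*} [CStarAlgebra A] [NormedAddCommGroup M] [NormedSpace ℂ M] [Module A M]
  [IsScalarTower ℂ A M]

noncomputable def traceGraph (inn : M → M → A) : Submodule ℂ ((M →L[ℂ] M) × A) :=
  span ℂ {p | ∃ x y : M, (∀ z, p.1 z = inn z y • x) ∧ p.2 = inn x y}

theorem traceGraph_map_fst (inn : M → M → A) :
    (traceGraph inn).map (LinearMap.fst ℂ (M →L[ℂ] M) A) = GammaStar A M inn := by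
  rw [traceGraph, map_span, GammaStar]
  congr 1
  ext T
  constructor
  · rintro ⟨p, ⟨x, y, hp, -⟩, rfl⟩
    exact ⟨x, y, hp⟩
  · rintro ⟨x, y, hT⟩
    exact ⟨(T, inn x y), ⟨x, y, hT, rfl⟩, rfl⟩

/-- `toLinearPMap` gives the zero map when `traceGraph inn` is not the graph of a function; it is
one for semi-inner products by `IsSemiInnerProduct.eq_zero_of_mem_traceGraph`. -/
noncomputable def gammaTrace (inn : M → M → A) : GammaStar A M inn →ₗ[ℂ] A :=
  (traceGraph inn).toLinearPMap.toFun ∘ₗ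
    (LinearEquiv.ofEq _ _ (traceGraph_map_fst inn).symm).toLinearMap

theorem IsSemiInnerProduct.exists_sum_of_mem_traceGraph [PartialOrder A] {inn : M → M → A}
    (h : IsSemiInnerProduct inn) {p : (M →L[ℂ] M) × A} (hp : p ∈ traceGraph inn) :
    ∃ (n : ℕ) (x y : Fin n → M),
      (∀ z, p.1 z = ∑ i, inn z (y i) • x i) ∧ p.2 = ∑ i, inn (x i) (y i) := by
  obtain ⟨n, c, g, rfl⟩ := mem_span_set'.mp hp
  choose x y hg using fun i => (g i).2
  refine ⟨n, fun i => c i • x i, y, fun z => ?_, ?_⟩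
  · simp only [Prod.fst_sum, Prod.smul_fst, _root_.sum_apply, _root_.smul_apply, (hg _).1,
      smul_comm (c _)]
  · simp only [Prod.snd_sum, Prod.smul_snd, (hg _).2, h.smul_left_of_tower]

theorem exists_mul_mem_traceGraph {inn : M → M → A} {T : M →L[ℂ] M} (T' : M → M)
    (hT' : ∀ u v, inn (T u) v = inn u (T' v)) (hT : ∀ (a : A) (u : M), T (a • u) = a • T u)
    {S : M →L[ℂ] M} (hS : S ∈ GammaStar A M inn) :
    ∃ a : A, (S * T, a) ∈ traceGraph inn ∧ (T * S, a) ∈ traceGraph inn := by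
  induction hS using Submodule.span_induction with
  | mem S hS =>
    obtain ⟨x, y, hxy⟩ := hS
    refine ⟨inn x (T' y), subset_span ⟨x, T' y, fun z => ?_, rfl⟩,
      subset_span ⟨T x, y, fun z => ?_, (hT' x y).symm⟩⟩
    · rw [mul_apply_eq_comp, hxy, hT']
    · rw [mul_apply_eq_comp, hxy, hT]
  | zero =>
    refine ⟨0, ?_, ?_⟩ <;> simpa only [zero_mul, mul_zero, Prod.mk_zero_zero] using zero_mem _
  | add S₁ S₂ _ _ ih₁ ih₂ =>
    obtain ⟨a₁, h₁, h₁'⟩ := ih₁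
    obtain ⟨a₂, h₂, h₂'⟩ := ih₂
    exact ⟨a₁ + a₂, by simpa only [add_mul, Prod.mk_add_mk] using add_mem h₁ h₂,
      by simpa only [mul_add, Prod.mk_add_mk] using add_mem h₁' h₂'⟩
  | smul c S _ ih =>
    obtain ⟨a, h, h'⟩ := ih
    exact ⟨c • a, by simpa only [smul_mul_assoc, Prod.smul_mk] using smul_mem _ c h,
      by simpa only [mul_smul_comm, Prod.smul_mk] using smul_mem _ c h'⟩

end Operators

section CommutativeOperators

variable {A M : Type*} [CommCStarAlgebra A] [PartialOrder A] [StarOrderedRing A]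
  [NormedAddCommGroup M] [NormedSpace ℂ M] [Module A M] [IsScalarTower ℂ A M]
  {inn : M → M → A} (h : IsSemiInnerProduct inn)
include h

theorem IsSemiInnerProduct.eq_zero_of_mem_traceGraph {p : (M →L[ℂ] M) × A}
    (hp : p ∈ traceGraph inn) (hp₁ : p.1 = 0) : p.2 = 0 := by
  obtain ⟨n, x, y, hp₁_eq, hp₂_eq⟩ := h.exists_sum_of_mem_traceGraph hp
  rw [hp₂_eq]
  exact h.sum_eq_zero_of_sum_smul_eq_zero fun z => by rw [← hp₁_eq, hp₁]; rfl

theorem IsSemiInnerProduct.gammaTrace_eq {T : M →L[ℂ] M} (hT : T ∈ GammaStar A M inn) {a : A}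
    (hTa : (T, a) ∈ traceGraph inn) : gammaTrace inn ⟨T, hT⟩ = a := by
  have hgraph : ∀ p ∈ traceGraph inn, p.1 = 0 → p.2 = 0 :=
    fun _ hp => h.eq_zero_of_mem_traceGraph hp
  have hT' : T ∈ (traceGraph inn).map (LinearMap.fst ℂ _ _) := (traceGraph_map_fst inn).symm ▸ hT
  exact (existsUnique_from_graph (fun hp => hgraph _ hp) hT').unique
    (mem_graph_toLinearPMap hgraph ⟨T, hT'⟩) hTa

end CommutativeOperators

theorem GammaStar_trace_well_defined_general
    (inn : M → M → A)
    (inn_add_left : ∀ x y z : M, inn (x + y) z = inn x z + inn y z)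
    (inn_smul_left : ∀ (a : A) (x y : M), inn (a • x) y = a * inn x y)
    (inn_star : ∀ x y : M, inn x y = star (inn y x))
    (inn_self_nonneg : ∀ x : M, 0 ≤ inn x x)
    (inn_definite : ∀ x : M, inn x x = 0 → x = 0)
    :
    ∃ φ : ↥(GammaStar A M inn) →ₗ[ℂ] A,
      (∀ (T : M →L[ℂ] M) (x y : M), (∀ z : M, T z = inn z y • x) →
        ∀ h : T ∈ GammaStar A M inn, φ ⟨T, h⟩ = inn x y) ∧
      (∀ (S : ↥(GammaStar A M inn)) (T : M →L[ℂ] M),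
        (∃ T' : M → M, ∀ u v : M, inn (T u) v = inn u (T' v)) →
        ∀ (h₁ : (S : M →L[ℂ] M) * T ∈ GammaStar A M inn)
          (h₂ : T * (S : M →L[ℂ] M) ∈ GammaStar A M inn),
          φ ⟨(S : M →L[ℂ] M) * T, h₁⟩ = φ ⟨T * (S : M →L[ℂ] M), h₂⟩) := by
  have hinn : IsSemiInnerProduct inn := ⟨inn_add_left, inn_smul_left, inn_star, inn_self_nonneg⟩
  refine ⟨gammaTrace inn, fun T x y hT hmem =>
    hinn.gammaTrace_eq hmem (subset_span ⟨x, y, hT, rfl⟩), ?_⟩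
  rintro S T ⟨T', hT'⟩ h₁ h₂
  obtain ⟨a, hST, hTS⟩ := exists_mul_mem_traceGraph T' hT'
    (hinn.map_smul_of_adjoint inn_definite hT') S.2
  rw [hinn.gammaTrace_eq h₁ hST, hinn.gammaTrace_eq h₂ hTS]

/-- The map `φ : Γ*(M) → A`, `φ(∑ θ_{xᵢ,ŷᵢ}) = ∑ ⟨xᵢ,yᵢ⟩`, is well defined, and is tracial:
`φ (S * T) = φ (T * S)` for `S ∈ Γ*(M)` and `T` adjointable. -/
theorem GammaStar_trace_well_defined
    (inn : M → M → A)
    (inn_add_left : ∀ x y z : M, inn (x + y) z = inn x z + inn y z)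
    (inn_smul_left : ∀ (a : A) (x y : M), inn (a • x) y = a * inn x y)
    (inn_star : ∀ x y : M, inn x y = star (inn y x))
    (inn_self_nonneg : ∀ x : M, 0 ≤ inn x x)
    (inn_definite : ∀ x : M, inn x x = 0 → x = 0)
    (norm_eq : ∀ x : M, ‖x‖ = Real.sqrt ‖inn x x‖)
    (full : (Submodule.span ℂ {a : A | ∃ x y : M, inn x y = a}).topologicalClosure = ⊤)
    :
    ∃ φ : ↥(GammaStar A M inn) →ₗ[ℂ] A,
      (∀ (T : M →L[ℂ] M) (x y : M), (∀ z : M, T z = inn z y • x) →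
        ∀ h : T ∈ GammaStar A M inn, φ ⟨T, h⟩ = inn x y) ∧
      (∀ (S : ↥(GammaStar A M inn)) (T : M →L[ℂ] M),
        (∃ T' : M → M, ∀ u v : M, inn (T u) v = inn u (T' v)) →
        ∀ (h₁ : (S : M →L[ℂ] M) * T ∈ GammaStar A M inn)
          (h₂ : T * (S : M →L[ℂ] M) ∈ GammaStar A M inn),
          φ ⟨(S : M →L[ℂ] M) * T, h₁⟩ = φ ⟨T * (S : M →L[ℂ] M), h₂⟩) :=
  GammaStar_trace_well_defined_general inn inn_add_left inn_smul_left inn_star inn_self_nonneg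
    inn_definite
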